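/- arXiv:math/0702601 — 3 statements merged into one kernel-verified Lean document; each statement's English description precedes it below -/
import Mathlib

section
/- Let P₁,…,P_{k+1} : ℝ → ℝⁿ be C¹ maps. Then for every t, the derivative d/dt [det(⟨P_a(t) − P₁(t), P_b(t) − P₁(t)⟩)_{2≤a,b≤k+1}] equals Σ_{1≤i<j≤k+1} det(⟨P_a(t) − P_i(t), P_b(t) − P_j(t)⟩)_{a,b} · d/dt[‖P_i(t) − P_j(t)‖²], where in each summand the indices a and b both run, in increasing order, over {1,…,k+1} ∖ {i,j}. -/
/-!
Border the Gram matrix of the points `P a t` by a row and a column of ones, with a zero corner.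
Schur complements show that its determinant is minus the Gram determinant of the differences
`P a - P 0`, and that for `i ≠ j` its `(i, j)` cofactor is the mixed Gram determinant
`det ⟪P a - P i, P b - P j⟫` over `a, b ∉ {i, j}`. Jacobi's formula differentiates the bordered
determinant; writing `⟪x, y⟫ = (‖x‖² + ‖y‖² - ‖x - y‖²) / 2`, the terms in `‖P a‖²` drop out
because every row of cofactors sums to zero, and only the squared distances remain.
-/

open Matrix
open scoped InnerProductSpace

namespace Matrix

section Jacobi

variable {ι : Type*} [Fintype ι] [DecidableEq ι]

theorem det_updateRow_eq_sum_mul_adjugate {R : Type*} [CommRing R] (M : Matrix ι ι R) (r : ι)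
    (w : ι → R) : (M.updateRow r w).det = ∑ c, w c * M.adjugate c r := by
  rw [det_eq_sum_mul_adjugate_row _ r]
  refine Finset.sum_congr rfl fun c _ => ?_
  rw [updateRow_self, adjugate_apply, adjugate_apply, updateRow_idem]

theorem hasDerivAt_det {𝕜 : Type*} [NontriviallyNormedField 𝕜] {M : 𝕜 → Matrix ι ι 𝕜}
    {M' : Matrix ι ι 𝕜} {t : 𝕜} (h : ∀ r c, HasDerivAt (fun u => M u r c) (M' r c) t) :
    HasDerivAt (fun u => (M u).det) (∑ r, ∑ c, M' r c * (M t).adjugate c r) t := by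
  let detRows : ContinuousMultilinearMap 𝕜 (fun _ : ι => ι → 𝕜) 𝕜 :=
    ⟨detRowAlternating.toMultilinearMap, continuous_id.matrix_det⟩
  have hM : HasDerivAt (fun u => of.symm (M u)) (of.symm M') t :=
    hasDerivAt_pi.2 fun r => hasDerivAt_pi.2 (h r)
  have hdet := (detRows.hasFDerivAt (of.symm (M t))).comp_hasDerivAt t hM
  rw [ContinuousMultilinearMap.linearDeriv_apply] at hdet
  simp_rw [← det_updateRow_eq_sum_mul_adjugate]
  exact hdet

end Jacobi

theorem det_eq_det_mul_det_schur {R m p n : Type*} [CommRing R] [Fintype m] [DecidableEq m]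
    [Fintype p] [DecidableEq p] [Fintype n] [DecidableEq n] {M : Matrix n n R} (e : m ⊕ p ≃ n)
    {A A' : Matrix m m R} {B : Matrix m p R} {C : Matrix p m R} {D : Matrix p p R}
    (hM : M.submatrix e e = fromBlocks A B C D) (hA : A' * A = 1) :
    M.det = A.det * (D - C * A' * B).det := by
  let := invertibleOfLeftInverse A A' hA
  rw [← det_submatrix_equiv_self e, hM, det_fromBlocks₁₁]
  rfl

theorem sum_sum_add_mul_eq_zero {ι R : Type*} [Fintype ι] [CommRing R] {A : Matrix ι ι R}
    (hA : A.IsSymm) (hrow : ∀ a, ∑ b, A a b = 0) (y : ι → R) :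
    ∑ a, ∑ b, (y a + y b) * A a b = 0 := by
  have hcol : ∀ b, ∑ a, A a b = 0 := fun b => by simpa [hA.apply] using hrow b
  simp only [add_mul, Finset.sum_add_distrib, ← Finset.mul_sum, hrow, mul_zero, zero_add]
  rw [Finset.sum_comm]
  simp [← Finset.mul_sum, hcol]

section Bordered

variable {ι α : Type*}

def bordered [Zero α] (x : α) (G : Matrix ι ι α) : Matrix (Option ι) (Option ι) α :=
  of fun r c => r.elim (c.elim 0 fun _ => x) fun a => c.elim x (G a)

section Apply

variable [Zero α] (x : α) (G : Matrix ι ι α)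

@[simp] theorem bordered_none_none : bordered x G none none = 0 := rfl
@[simp] theorem bordered_none_some (b : ι) : bordered x G none (some b) = x := rfl
@[simp] theorem bordered_some_none (a : ι) : bordered x G (some a) none = x := rfl
@[simp] theorem bordered_some_some (a b : ι) : bordered x G (some a) (some b) = G a b := rfl

theorem IsSymm.bordered {G : Matrix ι ι α} (hG : G.IsSymm) : (bordered x G).IsSymm := by
  ext (_ | a) (_ | b) <;> simp [hG.apply]

end Apply

variable [Fintype ι] [DecidableEq ι]

theorem sum_adjugate_bordered_one_some [CommRing α] (G : Matrix ι ι α) (a : ι) :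
    ∑ b, (bordered 1 G).adjugate (some a) (some b) = 0 := by
  simpa [mul_apply, Fintype.sum_option, one_apply] using
    congrFun₂ (adjugate_mul (bordered 1 G)) (some a) none

theorem hasDerivAt_det_bordered {𝕜 : Type*} [NontriviallyNormedField 𝕜] (x : 𝕜)
    {G : 𝕜 → Matrix ι ι 𝕜} {G' : Matrix ι ι 𝕜} {t : 𝕜}
    (h : ∀ a b, HasDerivAt (fun u => G u a b) (G' a b) t) :
    HasDerivAt (fun u => (bordered x (G u)).det)
      (∑ a, ∑ b, G' a b * (bordered x (G t)).adjugate (some b) (some a)) t := by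
  have hentry : ∀ r c, HasDerivAt (fun u => bordered x (G u) r c) (bordered 0 G' r c) t := by
    rintro (_ | a) (_ | b)
    · exact hasDerivAt_const t 0
    · exact hasDerivAt_const t x
    · exact hasDerivAt_const t x
    · exact h a b
  simpa [Fintype.sum_option] using hasDerivAt_det hentry

end Bordered

end Matrix

theorem Finset.sum_sum_eq_two_mul_sum_sum_lt {ι R : Type*} [Fintype ι] [LinearOrder ι]
    [NonAssocSemiring R] {T : ι → ι → R} (hT : ∀ i j, T i j = T j i) (hdiag : ∀ i, T i i = 0) :
    ∑ i, ∑ j, T i j = 2 * ∑ i, ∑ j, if i < j then T i j else 0 := by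
  have hsplit : ∀ i j, T i j = (if i < j then T i j else 0) + (if j < i then T j i else 0) := by
    intro i j
    rcases lt_trichotomy i j with h | rfl | h
    · simp [h, h.not_gt]
    · simp [hdiag]
    · simp [h, h.not_gt, hT i j]
  calc ∑ i, ∑ j, T i j
      = ∑ i, ∑ j, ((if i < j then T i j else 0) + (if j < i then T j i else 0)) :=
        Finset.sum_congr rfl fun i _ => Finset.sum_congr rfl fun j _ => hsplit i j
    _ = (∑ i, ∑ j, if i < j then T i j else 0) + ∑ i, ∑ j, if i < j then T i j else 0 := by
        simp only [Finset.sum_add_distrib]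
        exact congrArg _ Finset.sum_comm
    _ = 2 * ∑ i, ∑ j, if i < j then T i j else 0 := (two_mul _).symm

section Gram

variable {E : Type*} [NormedAddCommGroup E] [InnerProductSpace ℝ E]

theorem isSymm_gram_real {ι : Type*} (v : ι → E) : (gram ℝ v).IsSymm :=
  IsSymm.ext fun a b => real_inner_comm (v a) (v b)

theorem hasDerivAt_inner_polarization {f g : ℝ → E} {t : ℝ} (hf : DifferentiableAt ℝ f t)
    (hg : DifferentiableAt ℝ g t) :
    HasDerivAt (fun u => ⟪f u, g u⟫_ℝ)
      ((deriv (fun u => ‖f u‖ ^ 2) t + deriv (fun u => ‖g u‖ ^ 2) t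
        - deriv (fun u => ‖f u - g u‖ ^ 2) t) / 2) t := by
  have hpol : (fun u => ⟪f u, g u⟫_ℝ) =
      fun u => (‖f u‖ ^ 2 + ‖g u‖ ^ 2 - ‖f u - g u‖ ^ 2) / 2 := by
    funext u
    rw [norm_sub_sq_real]
    ring
  rw [hpol]
  exact (((hf.norm_sq ℝ).hasDerivAt.add (hg.norm_sq ℝ).hasDerivAt).sub
    ((hf.sub hg).norm_sq ℝ).hasDerivAt).div_const 2

theorem det_bordered_one_gram {k : ℕ} (v : Fin (k + 1) → E) :
    (bordered 1 (gram ℝ v)).det = -(gram ℝ fun a : Fin k => v a.succ - v 0).det := by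
  let e : Fin 2 ⊕ Fin k ≃ Option (Fin (k + 1)) :=
    { toFun := Sum.elim ![none, some 0] fun a => some a.succ
      invFun := fun r => r.elim (Sum.inl 0) fun x => Fin.cases (Sum.inl 1) Sum.inr x
      left_inv := by
        rintro (z | a)
        · fin_cases z <;> simp
        · simp
      right_inv := by
        rintro (_ | x)
        · simp
        · induction x using Fin.cases <;> simp }
  set g := ⟪v 0, v 0⟫_ℝ
  have hblocks : (bordered 1 (gram ℝ v)).submatrix e e =
      fromBlocks !![0, 1; 1, g] (of fun r b => ![1, ⟪v 0, v b.succ⟫_ℝ] r)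
        (of fun a r => ![1, ⟪v a.succ, v 0⟫_ℝ] r) (gram ℝ fun a => v a.succ) := by
    ext (i | a) (j | b)
    · fin_cases i <;> fin_cases j <;> simp [e, g]
    · fin_cases i <;> simp [e]
    · fin_cases j <;> simp [e]
    · simp [e]
  have hinv : !![-g, 1; 1, 0] * !![0, 1; 1, g] = 1 := by
    ext i j
    fin_cases i <;> fin_cases j <;> simp
  rw [det_eq_det_mul_det_schur e hblocks hinv, det_fin_two_of]
  have hschur : gram ℝ (fun a => v a.succ) - of (fun a r => ![1, ⟪v a.succ, v 0⟫_ℝ] r) *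
      !![-g, 1; 1, 0] * of (fun r b => ![1, ⟪v 0, v b.succ⟫_ℝ] r)
      = gram ℝ fun a : Fin k => v a.succ - v 0 := by
    ext a b
    simp [mul_apply, Fin.sum_univ_two, inner_sub_left, inner_sub_right,
      real_inner_comm (v 0) (v a.succ), g]
    ring
  rw [hschur]
  ring

theorem adjugate_bordered_one_gram {ι : Type*} [Fintype ι] [DecidableEq ι] (v : ι → E) {i j : ι}
    (hij : i ≠ j) : (bordered 1 (gram ℝ v)).adjugate (some i) (some j) =
      (of fun a b : {x // x ≠ i ∧ x ≠ j} => ⟪v a - v i, v b - v j⟫_ℝ).det := by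
  let S := {x // x ≠ i ∧ x ≠ j}
  let e : Fin 3 ⊕ S ≃ Option ι :=
    { toFun := Sum.elim ![none, some i, some j] fun a => some a.1
      invFun := fun r => r.elim (Sum.inl 0) fun x =>
        if h₁ : x = i then Sum.inl 1 else if h₂ : x = j then Sum.inl 2 else Sum.inr ⟨x, h₁, h₂⟩
      left_inv := by
        rintro (z | a)
        · fin_cases z <;> simp [hij.symm]
        · simp [a.2.1, a.2.2]
      right_inv := by
        rintro (_ | x)
        · simp
        · by_cases h₁ : x = i
          · simp [h₁]
          · by_cases h₂ : x = j <;> simp [h₁, h₂, hij.symm] }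
  set g := ⟪v i, v i⟫_ℝ
  set h := ⟪v i, v j⟫_ℝ
  have hblocks :
      ((bordered 1 (gram ℝ v)).updateRow (some j) (Pi.single (some i) 1)).submatrix e e =
        fromBlocks !![0, 1, 1; 1, g, h; 0, 1, 0] (of fun r b => ![1, ⟪v i, v b.1⟫_ℝ, 0] r)
          (of fun a r => ![1, ⟪v a.1, v i⟫_ℝ, ⟪v a.1, v j⟫_ℝ] r) (gram ℝ fun a : S => v a.1) := by
    ext (r | a) (c | b)
    · fin_cases r <;> fin_cases c <;> simp [e, g, h, updateRow_apply, hij, hij.symm]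
    · fin_cases r <;> simp [e, updateRow_apply, hij, b.2.1.symm]
    · fin_cases c <;> simp [e, updateRow_apply, a.2.2]
    · simp [e, updateRow_apply, a.2.2]
  have hinv : !![-h, 1, h - g; 0, 0, 1; 1, 0, -1] * !![0, 1, 1; 1, g, h; 0, 1, 0] = 1 := by
    ext r c
    fin_cases r <;> fin_cases c <;> simp [vecHead, vecTail]
  have hdet : (!![0, 1, 1; 1, g, h; 0, 1, 0] : Matrix (Fin 3) (Fin 3) ℝ).det = 1 := by
    simp [det_fin_three]
  rw [adjugate_apply, det_eq_det_mul_det_schur e hblocks hinv, hdet, one_mul]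
  have hschur : gram ℝ (fun a : S => v a.1) -
      of (fun a r => ![1, ⟪v a.1, v i⟫_ℝ, ⟪v a.1, v j⟫_ℝ] r) *
        !![-h, 1, h - g; 0, 0, 1; 1, 0, -1] * of (fun r b => ![1, ⟪v i, v b.1⟫_ℝ, 0] r)
      = of fun a b : S => ⟪v a - v i, v b - v j⟫_ℝ := by
    ext a b
    simp [mul_apply, Fin.sum_univ_three, inner_sub_left, inner_sub_right,
      real_inner_comm (v i) (v a.1), h]
    ring
  rw [hschur]

theorem hasDerivAt_det_bordered_one_gram {ι : Type*} [Fintype ι] [DecidableEq ι] {P : ι → ℝ → E}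
    {t : ℝ} (hP : ∀ a, DifferentiableAt ℝ (P a) t) :
    HasDerivAt (fun u => (bordered 1 (gram ℝ fun a => P a u)).det)
      (-(∑ a, ∑ b, deriv (fun u => ‖P a u - P b u‖ ^ 2) t *
        (bordered 1 (gram ℝ fun a => P a t)).adjugate (some a) (some b)) / 2) t := by
  set A : Matrix ι ι ℝ := (bordered 1 (gram ℝ fun a => P a t)).adjugate.submatrix some some
  have hA : A.IsSymm := ((isSymm_gram_real _).bordered 1).adjugate.submatrix some
  set N : ι → ℝ := fun a => deriv (fun u => ‖P a u‖ ^ 2) t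
  set D : ι → ι → ℝ := fun a b => deriv (fun u => ‖P a u - P b u‖ ^ 2) t
  refine (hasDerivAt_det_bordered 1 fun a b =>
    hasDerivAt_inner_polarization (hP a) (hP b)).congr_deriv ?_
  symm
  calc -(∑ a, ∑ b, D a b * A a b) / 2
      = ((∑ a, ∑ b, (N a + N b) * A a b) - ∑ a, ∑ b, D a b * A a b) / 2 := by
        rw [sum_sum_add_mul_eq_zero hA (sum_adjugate_bordered_one_some _) N, zero_sub]
    _ = ∑ a, ∑ b, (N a + N b - D a b) / 2 * A b a := by
        simp only [← Finset.sum_sub_distrib, Finset.sum_div, hA.apply]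
        refine Finset.sum_congr rfl fun a _ => Finset.sum_congr rfl fun b _ => ?_
        ring

end Gram

/-- For `C¹` motions `P₁(t), …, P_{k+1}(t)` in `ℝⁿ`, the derivative of the Gram determinant
`det(⟨P_a(t) − P₁(t), P_b(t) − P₁(t)⟩)_{2 ≤ a,b ≤ k+1}` equals
`Σ_{i<j} det(⟨P_a(t) − P_i(t), P_b(t) − P_j(t)⟩)_{a,b ∉ {i,j}} · d/dt ‖P_i(t) − P_j(t)‖²`. -/
theorem deriv_gram_det_motion {n k : ℕ} (P : Fin (k + 1) → ℝ → EuclideanSpace ℝ (Fin n))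
    (hP : ∀ i, ContDiff ℝ 1 (P i)) (t : ℝ) :
    HasDerivAt
      (fun u : ℝ => Matrix.det (Matrix.of fun a b : Fin k =>
        (inner ℝ (P a.succ u - P 0 u) (P b.succ u - P 0 u) : ℝ)))
      (∑ i : Fin (k + 1), ∑ j : Fin (k + 1), if i < j then
        Matrix.det (Matrix.of fun (a b : {x : Fin (k + 1) // x ≠ i ∧ x ≠ j}) =>
          (inner ℝ (P a.1 t - P i t) (P b.1 t - P j t) : ℝ)) *
          deriv (fun u : ℝ => ‖P i u - P j u‖ ^ 2) t
        else 0)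
      t := by
  have hgram : (fun u => det (of fun a b : Fin k => ⟪P a.succ u - P 0 u, P b.succ u - P 0 u⟫_ℝ))
      = fun u => -(bordered 1 (gram ℝ fun a => P a u)).det := by
    funext u
    rw [det_bordered_one_gram, neg_neg]
    rfl
  rw [hgram]
  refine (hasDerivAt_det_bordered_one_gram fun i =>
    (hP i).differentiable one_ne_zero t).neg.congr_deriv ?_
  have hA := ((isSymm_gram_real fun a => P a t).bordered 1).adjugate
  rw [neg_div, neg_neg, Finset.sum_sum_eq_two_mul_sum_sum_lt
    (fun i j => by simp only [norm_sub_rev (P i _), hA.apply]) (fun i => by simp),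
    mul_div_cancel_left₀ _ two_ne_zero]
  refine Finset.sum_congr rfl fun i _ => Finset.sum_congr rfl fun j _ => ?_
  split_ifs with hij
  · rw [adjugate_bordered_one_gram _ hij.ne]
    exact mul_comm _ _
  · rfl
end

section
/- Equip ℝ^{n+1}, with coordinates (x₀,…,x_n), with the Minkowski bilinear form ⟪x,y⟫ = −x₀y₀ + x₁y₁ + ⋯ + x_n y_n, and let Hⁿ = {x : ⟪x,x⟫ = −1, x₀ > 0}. Let A₁,…,A_{n+2} ∈ Hⁿ be in general position and α₁,…,α_{n+2} nonzero reals with Σᵢ αᵢAᵢ = 0. Suppose B₁,…,B_{n+2} : [0,1] → Hⁿ are continuous maps with Bᵢ(0) = Aᵢ satisfying, for all t ∈ [0,1], the tensegrity constraints of F_{n,1}: ⟪Bᵢ(t)−B_j(t), Bᵢ(t)−B_j(t)⟫ ≥ ⟪Aᵢ−A_j, Aᵢ−A_j⟫ whenever αᵢα_j < 0, and ⟪Bᵢ(t)−B_j(t), Bᵢ(t)−B_j(t)⟫ ≤ ⟪Aᵢ−A_j, Aᵢ−A_j⟫ whenever αᵢα_j > 0. Then ⟪Bᵢ(t)−B_j(t),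 Bᵢ(t)−B_j(t)⟫ = ⟪Aᵢ−A_j, Aᵢ−A_j⟫ for all i, j and all t ∈ [0,1]; i.e. F_{n,1} is rigid in hyperbolic space Hⁿ. -/
/-!
On the hyperboloid `⟪x - y, x - y⟫ = -2 - 2⟪x, y⟫`, so the strut and cable constraints say exactly
that the stress `ωᵢⱼ = αᵢαⱼ (⟪Bᵢ, Bⱼ⟫ - ⟪Aᵢ, Aⱼ⟫)` is nonnegative. If the moved configuration has
a linear dependency `∑ βᵢ Bᵢ = 0` with every `αᵢβᵢ > 0`, put `v = ∑ αⱼ Bⱼ`: then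
`αᵢ ⟪Bᵢ, v⟫ = ∑ⱼ ωᵢⱼ ≥ 0` while `∑ βᵢ ⟪Bᵢ, v⟫ = 0`, which forces every `ωᵢⱼ` to vanish.

Such a dependency exists near every time at which `B` has the Gram matrix of `A`: there, since the
form is nondegenerate and `A` spans, the dependencies of `B` are those of `A`, namely the multiples
of `α`. The dependency normalized by `α ⬝ᵥ β = 1` is then the solution of an invertible linear
system, so it moves continuously and keeps `αᵢβᵢ > 0` for a while. Hence the set of times at which
the Gram matrix is that of `A` is closed, contains `0` and is open to the right: it is all of
`[0, 1]`.
-/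

/-- The Minkowski bilinear form on `ℝ^{m+1}` with coordinates `(x₀, …, x_m)`:
`⟪x,y⟫ = −x₀y₀ + x₁y₁ + ⋯ + x_m y_m`. -/
def mink {m : ℕ} (x y : Fin (m + 1) → ℝ) : ℝ :=
  ∑ i, (if i = 0 then -(x i * y i) else x i * y i)

/-- The hyperboloid model of hyperbolic space: `⟪x,x⟫ = −1` and `x₀ > 0`. -/
def InHyperbolic {m : ℕ} (x : Fin (m + 1) → ℝ) : Prop :=
  mink x x = -1 ∧ 0 < x 0

open Finset Matrix Filter Topology

section Minkowski

variable {m : ℕ}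

def minkowskiForm : LinearMap.BilinForm ℝ (Fin (m + 1) → ℝ) :=
  toBilin' (diagonal fun i => if i = 0 then -1 else 1)

theorem minkowskiForm_apply (x y : Fin (m + 1) → ℝ) : minkowskiForm x y = mink x y := by
  simp only [minkowskiForm, toBilin'_apply', mulVec_diagonal, dotProduct, mink]
  refine sum_congr rfl fun i _ => ?_
  split_ifs <;> ring

theorem minkowskiForm_separatingLeft : (minkowskiForm (m := m)).SeparatingLeft :=
  (LinearMap.BilinForm.nondegenerate_toBilin'_iff_det_ne_zero.mpr <| by
    rw [det_diagonal]
    exact prod_ne_zero_iff.mpr fun i _ => by split_ifs <;> norm_num).1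

theorem mink_comm (x y : Fin (m + 1) → ℝ) : mink x y = mink y x := by
  simp only [mink, mul_comm (x _)]

theorem mink_sub_self_of_inHyperbolic {x y : Fin (m + 1) → ℝ} (hx : InHyperbolic x)
    (hy : InHyperbolic y) : mink (x - y) (x - y) = -2 - 2 * mink x y := by
  simp only [← minkowskiForm_apply, map_sub, LinearMap.sub_apply]
  simp only [minkowskiForm_apply, mink_comm y x, hx.1, hy.1]
  ring

theorem continuous_mink :
    Continuous fun p : (Fin (m + 1) → ℝ) × (Fin (m + 1) → ℝ) => mink p.1 p.2 := by
  refine continuous_finsetSum _ fun i _ => ?_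
  split_ifs <;> fun_prop

theorem mul_mink_sub_nonneg {a : ℝ} {x y x' y' : Fin (m + 1) → ℝ} (hx : InHyperbolic x)
    (hy : InHyperbolic y) (hx' : InHyperbolic x') (hy' : InHyperbolic y')
    (hstrut : a < 0 → mink (x - y) (x - y) ≤ mink (x' - y') (x' - y'))
    (hcable : 0 < a → mink (x' - y') (x' - y') ≤ mink (x - y) (x - y)) :
    0 ≤ a * (mink x' y' - mink x y) := by
  rw [mink_sub_self_of_inHyperbolic hx hy, mink_sub_self_of_inHyperbolic hx' hy'] at hstrut hcable
  rcases lt_trichotomy a 0 with ha | rfl | ha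
  · nlinarith [hstrut ha]
  · rw [zero_mul]
  · nlinarith [hcable ha]

def minkGram {ι : Type*} (v : ι → Fin (m + 1) → ℝ) : Matrix ι ι ℝ :=
  of fun i j => mink (v i) (v j)

@[simp]
theorem minkGram_apply {ι : Type*} (v : ι → Fin (m + 1) → ℝ) (i j : ι) :
    minkGram v i j = mink (v i) (v j) :=
  rfl

end Minkowski

theorem gram_eq_of_stress_nonneg {ι K V : Type*} [Fintype ι] [Field K] [LinearOrder K]
    [IsStrictOrderedRing K] [AddCommGroup V] [Module K V]
    (b : LinearMap.BilinForm K V) {P C : ι → V} {α β : ι → K}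
    (hP : ∑ i, α i • P i = 0) (hC : ∑ i, β i • C i = 0) (hαβ : ∀ i, 0 < α i * β i)
    (hstress : ∀ i j, 0 ≤ α i * α j * (b (C i) (C j) - b (P i) (P j))) :
    ∀ i j, b (C i) (C j) = b (P i) (P j) := by
  set s : ι → K := fun i => ∑ j, α j * (b (C i) (C j) - b (P i) (P j))
  have hs : ∀ i, s i = b (C i) (∑ j, α j • C j) := by
    intro i
    have hP0 : b (P i) (∑ j, α j • P j) = 0 := by rw [hP, map_zero]
    simp only [s, mul_sub, sum_sub_distrib, map_sum, map_smul, smul_eq_mul] at hP0 ⊢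
    rw [hP0, sub_zero]
  have hrow : ∀ i, α i * s i = ∑ j, α i * α j * (b (C i) (C j) - b (P i) (P j)) := by
    intro i
    simp only [s, mul_sum, mul_assoc]
  have hterm : ∀ i, 0 ≤ β i * s i := by
    intro i
    have h : 0 ≤ (α i * β i) * (α i * s i) :=
      mul_nonneg (hαβ i).le (hrow i ▸ sum_nonneg fun j _ => hstress i j)
    have hαα : 0 < α i * α i := mul_self_pos.mpr (left_ne_zero_of_mul (hαβ i).ne')
    exact (mul_nonneg_iff_of_pos_left hαα).mp (by linarith)
  have htotal : ∑ i, β i * s i = 0 :=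
    calc ∑ i, β i * s i = b (∑ i, β i • C i) (∑ j, α j • C j) := by
          simp only [hs, LinearMap.BilinForm.sum_left, LinearMap.BilinForm.smul_left]
      _ = 0 := by rw [hC, LinearMap.BilinForm.zero_left]
  intro i j
  have hβs : β i * s i = 0 :=
    (sum_eq_zero_iff_of_nonneg fun k _ => hterm k).mp htotal i (mem_univ i)
  have hsi : s i = 0 := (mul_eq_zero.mp hβs).resolve_left fun h => by simpa [h] using hαβ i
  have hij := (sum_eq_zero_iff_of_nonneg fun k _ => hstress i k).mp
    (by rw [← hrow, hsi, mul_zero]) j (mem_univ j)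
  have hαij : α i * α j ≠ 0 :=
    mul_ne_zero (left_ne_zero_of_mul (hαβ i).ne') (left_ne_zero_of_mul (hαβ j).ne')
  exact sub_eq_zero.mp ((mul_eq_zero.mp hij).resolve_left hαij)

section PerturbedSystem

variable {ι 𝕜 X : Type*} [Fintype ι] [DecidableEq ι]

theorem mulVec_nonsing_inv_mulVec [CommRing 𝕜] {M : Matrix ι ι 𝕜} (hM : IsUnit M.det)
    (w : ι → 𝕜) : M *ᵥ (M⁻¹ *ᵥ w) = w := by
  rw [mulVec_mulVec, mul_nonsing_inv _ hM, one_mulVec]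

variable [NormedField 𝕜] {l : Filter X} {M : X → Matrix ι ι 𝕜} {M₀ : Matrix ι ι 𝕜}

theorem tendsto_nonsing_inv_mulVec [CompleteSpace 𝕜] (hM : Tendsto M l (𝓝 M₀))
    (hM₀ : IsUnit M₀.det) (w : ι → 𝕜) :
    Tendsto (fun x => (M x)⁻¹ *ᵥ w) l (𝓝 (M₀⁻¹ *ᵥ w)) :=
  ((continuous_id.matrix_mulVec continuous_const).tendsto _).comp
    ((continuousAt_matrix_inv M₀ (NormedRing.inverse_continuousAt hM₀.unit)).tendsto.comp hM)

theorem eventually_mulVec_nonsing_inv_mulVec (hM : Tendsto M l (𝓝 M₀)) (hM₀ : IsUnit M₀.det)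
    (w : ι → 𝕜) : ∀ᶠ x in l, M x *ᵥ ((M x)⁻¹ *ᵥ w) = w :=
  (((continuous_id.matrix_det.tendsto M₀).comp hM).eventually_ne hM₀.ne_zero).mono
    fun _ hx => mulVec_nonsing_inv_mulVec (isUnit_iff_ne_zero.mpr hx) w

end PerturbedSystem

section DependencyMatrix

variable {m : ℕ}

def dependencyMatrix (α : Fin (m + 1) → ℝ) (v : Fin (m + 1) → Fin m → ℝ) :
    Matrix (Fin (m + 1)) (Fin (m + 1)) ℝ :=
  of (vecCons α fun j i => v i j)

theorem dependencyMatrix_mulVec (α : Fin (m + 1) → ℝ) (v : Fin (m + 1) → Fin m → ℝ)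
    (γ : Fin (m + 1) → ℝ) :
    dependencyMatrix α v *ᵥ γ = vecCons (α ⬝ᵥ γ) (∑ i, γ i • v i) := by
  rw [dependencyMatrix, cons_mulVec]
  congr 1
  ext j
  simp [mulVec, dotProduct, mul_comm]

theorem continuous_dependencyMatrix (α : Fin (m + 1) → ℝ) :
    Continuous (dependencyMatrix α) := by
  refine continuous_pi fun r => continuous_pi fun i => ?_
  refine Fin.cases ?_ (fun j => ?_) r
  · exact continuous_const
  · simp only [dependencyMatrix, of_apply, cons_val_succ]
    fun_prop

variable {α : Fin (m + 1) → ℝ} {v : Fin (m + 1) → Fin m → ℝ}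

theorem det_dependencyMatrix_ne_zero (hα : α ≠ 0)
    (hdep : ∀ γ : Fin (m + 1) → ℝ, ∑ i, γ i • v i = 0 → ∃ μ : ℝ, γ = μ • α) :
    (dependencyMatrix α v).det ≠ 0 := by
  intro hdet
  obtain ⟨γ, hγ, hγ0⟩ := exists_mulVec_eq_zero_iff.mpr hdet
  rw [dependencyMatrix_mulVec] at hγ0
  obtain ⟨μ, rfl⟩ := hdep γ (congrArg vecTail hγ0)
  have hμ : μ * (α ⬝ᵥ α) = 0 := by simpa [dotProduct_smul] using congrFun hγ0 0
  have hαα : α ⬝ᵥ α ≠ 0 := dotProduct_self_eq_zero.not.mpr hα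
  exact hγ (by rw [(mul_eq_zero.mp hμ).resolve_right hαα, zero_smul])

theorem mul_pos_of_dependencyMatrix_mulVec_eq (hα : ∀ i, α i ≠ 0)
    (hdep : ∀ γ : Fin (m + 1) → ℝ, ∑ i, γ i • v i = 0 → ∃ μ : ℝ, γ = μ • α)
    {β : Fin (m + 1) → ℝ} (hβ : dependencyMatrix α v *ᵥ β = vecCons 1 0) :
    ∀ i, 0 < α i * β i := by
  rw [dependencyMatrix_mulVec] at hβ
  obtain ⟨hαβ, hβv⟩ := vecCons_inj.mp hβ
  obtain ⟨μ, rfl⟩ := hdep β hβv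
  have hμ : 0 < μ := by
    rw [dotProduct_smul, smul_eq_mul] at hαβ
    exact pos_of_mul_pos_left (hαβ ▸ one_pos) (sum_nonneg fun i _ => mul_self_nonneg (α i))
  intro i
  rw [Pi.smul_apply, smul_eq_mul, mul_left_comm]
  exact mul_pos hμ (mul_self_pos.mpr (hα i))

theorem eventually_exists_dependency_pos {X : Type*} {l : Filter X}
    {w : X → Fin (m + 1) → Fin m → ℝ} (hw : Tendsto w l (𝓝 v)) (hα : ∀ i, α i ≠ 0)
    (hdep : ∀ γ : Fin (m + 1) → ℝ, ∑ i, γ i • v i = 0 → ∃ μ : ℝ, γ = μ • α) :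
    ∀ᶠ x in l, ∃ β : Fin (m + 1) → ℝ, ∑ i, β i • w x i = 0 ∧ ∀ i, 0 < α i * β i := by
  have hM : Tendsto (fun x => dependencyMatrix α (w x)) l (𝓝 (dependencyMatrix α v)) :=
    ((continuous_dependencyMatrix α).tendsto v).comp hw
  have hM₀ : IsUnit (dependencyMatrix α v).det :=
    (det_dependencyMatrix_ne_zero (fun h => hα 0 (congrFun h 0)) hdep).isUnit
  have hpos := mul_pos_of_dependencyMatrix_mulVec_eq hα hdep
    (mulVec_nonsing_inv_mulVec hM₀ (vecCons 1 0))
  have hsign : ∀ᶠ x in l, ∀ i, 0 < α i * ((dependencyMatrix α (w x))⁻¹ *ᵥ vecCons 1 0) i :=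
    eventually_all.mpr fun i =>
      ((tendsto_pi_nhds.mp (tendsto_nonsing_inv_mulVec hM hM₀ _) i).const_mul (α i)).eventually
        (lt_mem_nhds (hpos i))
  filter_upwards [eventually_mulVec_nonsing_inv_mulVec hM hM₀ (vecCons 1 0), hsign]
    with x hx hxsign
  rw [dependencyMatrix_mulVec] at hx
  exact ⟨_, (vecCons_inj.mp hx).2, hxsign⟩

end DependencyMatrix

section GeneralPosition

variable {ι K V : Type*} [Fintype ι] [Field K] [AddCommGroup V] [Module K V]

theorem eq_smul_of_linearIndependent_erase [DecidableEq ι] {v : ι → V} {k : ι}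
    (hv : LinearIndependent K fun i : ↥(univ.erase k) => v i) {α γ : ι → K}
    (hα : ∑ i, α i • v i = 0) (hαk : α k ≠ 0) (hγ : ∑ i, γ i • v i = 0) :
    γ = (γ k / α k) • α := by
  set ζ := γ - (γ k / α k) • α
  have hζk : ζ k = 0 := by simp [ζ, div_mul_cancel₀ _ hαk]
  have hζ : ∑ i : ↥(univ.erase k), ζ i • v i = 0 := by
    rw [sum_coe_sort (univ.erase k) (fun i => ζ i • v i), sum_erase _ (by rw [hζk, zero_smul])]
    simp [ζ, sub_smul, sum_sub_distrib, mul_smul, ← smul_sum, hα, hγ]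
  have hζ0 : ζ = 0 := by
    funext i
    by_cases hi : i = k
    · rw [hi, hζk]; rfl
    · exact Fintype.linearIndependent_iff.mp hv (fun i => ζ i) hζ ⟨i, by simp [hi]⟩
  exact sub_eq_zero.mp hζ0

theorem sum_smul_eq_zero_of_gram_eq (b : LinearMap.BilinForm K V) (hb : b.SeparatingLeft)
    {A C : ι → V} (hA : Submodule.span K (Set.range A) = ⊤)
    (hgram : ∀ i j, b (C i) (C j) = b (A i) (A j)) {γ : ι → K} (hγ : ∑ i, γ i • C i = 0) :
    ∑ i, γ i • A i = 0 := by
  have hvanish : b (∑ i, γ i • A i) = 0 := by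
    refine LinearMap.ext_on_range hA fun j => ?_
    calc b (∑ i, γ i • A i) (A j) = b (∑ i, γ i • C i) (C j) := by
          simp only [LinearMap.BilinForm.sum_left, LinearMap.BilinForm.smul_left, hgram]
      _ = 0 := by rw [hγ, LinearMap.BilinForm.zero_left]
  exact hb _ fun y => by rw [hvanish, LinearMap.zero_apply]

end GeneralPosition

theorem exists_eq_smul_of_minkGram_eq {n : ℕ} {A : Fin (n + 2) → Fin (n + 1) → ℝ}
    (hgp : ∀ s : Finset (Fin (n + 2)), s.card = n + 1 →
      LinearIndependent ℝ (fun i : ↥s => A i.1))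
    {α : Fin (n + 2) → ℝ} (hα : ∀ i, α i ≠ 0) (hsum : ∑ i, α i • A i = 0)
    {P : Fin (n + 2) → Fin (n + 1) → ℝ} (hP : minkGram P = minkGram A)
    {γ : Fin (n + 2) → ℝ} (hγ : ∑ i, γ i • P i = 0) : ∃ μ : ℝ, γ = μ • α := by
  have hli := hgp (univ.erase 0) (by simp)
  have hspan : Submodule.span ℝ (Set.range A) = ⊤ :=
    eq_top_mono (Submodule.span_mono (Set.range_comp_subset_range _ A))
      (hli.span_eq_top_of_card_eq_finrank' (by simp))
  have hgram (i j : Fin (n + 2)) : minkowskiForm (P i) (P j) = minkowskiForm (A i) (A j) := by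
    simpa only [minkowskiForm_apply, minkGram_apply] using congrFun (congrFun hP i) j
  exact ⟨_, eq_smul_of_linearIndependent_erase hli hsum (hα 0)
    (sum_smul_eq_zero_of_gram_eq minkowskiForm minkowskiForm_separatingLeft hspan hgram hγ)⟩

theorem eventually_minkGram_eq {n : ℕ} {A : Fin (n + 2) → Fin (n + 1) → ℝ}
    (hgp : ∀ s : Finset (Fin (n + 2)), s.card = n + 1 →
      LinearIndependent ℝ (fun i : ↥s => A i.1))
    {α : Fin (n + 2) → ℝ} (hα : ∀ i, α i ≠ 0) (hsum : ∑ i, α i • A i = 0)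
    {X : Type*} {l : Filter X} {C : X → Fin (n + 2) → Fin (n + 1) → ℝ}
    {P : Fin (n + 2) → Fin (n + 1) → ℝ} (hC : Tendsto C l (𝓝 P))
    (hP : minkGram P = minkGram A)
    (hstress : ∀ᶠ x in l, ∀ i j, 0 ≤ α i * α j * (mink (C x i) (C x j) - mink (A i) (A j))) :
    ∀ᶠ x in l, minkGram (C x) = minkGram A := by
  filter_upwards [eventually_exists_dependency_pos hC hα
      fun γ => exists_eq_smul_of_minkGram_eq hgp hα hsum hP, hstress]
    with x ⟨β, hβ, hαβ⟩ hx
  ext i j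
  simpa only [minkowskiForm_apply, minkGram_apply] using
    gram_eq_of_stress_nonneg minkowskiForm hsum hβ hαβ (by simpa only [minkowskiForm_apply]) i j

/-- The framework `F_{n,1}` is rigid in `Hⁿ`: any continuous motion on the hyperboloid
`Hⁿ ⊂ ℝ^{n+1}` satisfying the strut-cable constraints determined by the signs of `αᵢα_j`
preserves all the Minkowski squared distances (equivalently, all hyperbolic distances). -/
theorem F_n1_rigid_hyperbolic {n : ℕ}
    (A : Fin (n + 2) → (Fin (n + 1) → ℝ))
    (hA : ∀ i, InHyperbolic (A i))
    (hgp : ∀ s : Finset (Fin (n + 2)), s.card = n + 1 →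
      LinearIndependent ℝ (fun i : ↥s => A i.1))
    (α : Fin (n + 2) → ℝ) (hα : ∀ i, α i ≠ 0)
    (hsum : ∑ i, α i • A i = 0)
    (B : Fin (n + 2) → ℝ → (Fin (n + 1) → ℝ))
    (hBcont : ∀ i, ContinuousOn (B i) (Set.Icc 0 1))
    (hBhyp : ∀ i, ∀ t ∈ Set.Icc (0 : ℝ) 1, InHyperbolic (B i t))
    (hB0 : ∀ i, B i 0 = A i)
    (hstrut : ∀ i j, α i * α j < 0 →
      ∀ t ∈ Set.Icc (0 : ℝ) 1,
        mink (A i - A j) (A i - A j) ≤ mink (B i t - B j t) (B i t - B j t))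
    (hcable : ∀ i j, 0 < α i * α j →
      ∀ t ∈ Set.Icc (0 : ℝ) 1,
        mink (B i t - B j t) (B i t - B j t) ≤ mink (A i - A j) (A i - A j)) :
    ∀ i j, ∀ t ∈ Set.Icc (0 : ℝ) 1,
      mink (B i t - B j t) (B i t - B j t) = mink (A i - A j) (A i - A j) := by
  set I := Set.Icc (0 : ℝ) 1
  set S := {t | minkGram (fun i => B i t) = minkGram A}
  have hstress : ∀ t ∈ I, ∀ i j, 0 ≤ α i * α j * (mink (B i t) (B j t) - mink (A i) (A j)) :=
    fun t ht i j => mul_mink_sub_nonneg (hA i) (hA j) (hBhyp i t ht) (hBhyp j t ht)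
      (fun h => hstrut i j h t ht) (fun h => hcable i j h t ht)
  have hclosed : IsClosed (S ∩ I) := by
    rw [Set.inter_comm]
    refine ContinuousOn.preimage_isClosed_of_isClosed ?_ isClosed_Icc isClosed_singleton
    exact continuousOn_pi.mpr fun i => continuousOn_pi.mpr fun j =>
      continuous_mink.comp_continuousOn ((hBcont i).prodMk (hBcont j))
  have hopen : ∀ t ∈ S ∩ Set.Ico 0 1, S ∈ 𝓝[>] t := by
    rintro t ⟨htS, ht⟩
    have hI : I ∈ 𝓝[>] t := Icc_mem_nhdsGT_of_mem ht
    exact eventually_minkGram_eq hgp hα hsum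
      (tendsto_pi_nhds.mpr fun i => ((hBcont i) t (Set.Ico_subset_Icc_self ht)).mono_left
        (nhdsWithin_le_of_mem hI)) htS (Filter.mem_of_superset hI hstress)
  have hsub : I ⊆ S := hclosed.Icc_subset_of_forall_mem_nhdsWithin (by simp [S, hB0]) hopen
  intro i j t ht
  rw [mink_sub_self_of_inHyperbolic (hBhyp i t ht) (hBhyp j t ht),
    mink_sub_self_of_inHyperbolic (hA i) (hA j),
    show mink (B i t) (B j t) = mink (A i) (A j) from congrFun (congrFun (hsub ht) i) j]
end

section
/- Let A₁,…,A_{n+2} be points on the unit sphere Sⁿ ⊂ ℝ^{n+1} in general position and α₁,…,α_{n+2} nonzero reals with Σᵢ αᵢAᵢ = 0. Then: (i) for all points P, Q ∈ Sⁿ with ⟨P,Q⟩ ≠ −1, one has Σᵢ αᵢ⟨Aᵢ − P, Aᵢ − Q⟩ / (1 + ⟨P,Q⟩) = Σᵢ αᵢ; in particular the quantity c₁ := 2·Σᵢ αᵢ⟨Aᵢ − P, Aᵢ − Q⟩/(1 + ⟨P,Q⟩) = 2Σᵢ αᵢ is independent of P and Q; and (ii) c₁ = 0, i.e. Σᵢ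 αᵢ = 0, if and only if the points A₁,…,A_{n+2} lie in a common n-dimensional affine hyperplane of ℝ^{n+1}. -/
/-!
Expanding `⟨Aᵢ - P, Aᵢ - Q⟩ = 1 + ⟨P, Q⟩ - ⟨Aᵢ, Q⟩ - ⟨P, Aᵢ⟩` and summing against `α`, the linear
terms vanish because `Σ αᵢ Aᵢ = 0`, leaving `(Σ αᵢ)(1 + ⟨P, Q⟩)`.

If `Σ αᵢ = 0`, the relation `Σ αᵢ Aᵢ = 0` is a nontrivial affine dependence, so the `n + 2` points
span an affine subspace of dimension at most `n`, and exactly `n` because any `n + 1` of them are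
linearly, hence affinely, independent. If `Σ αᵢ ≠ 0`, then `0 = Σ (αᵢ / Σ αⱼ) Aᵢ` is an affine
combination of the points, so any affine subspace containing them passes through the origin and
contains `n + 1` linearly independent vectors, which is too many for dimension `n`.
-/

/-- Points on the unit sphere of `ℝ^{d}` are in spherical general position if every `d` of
them are linearly independent. -/
def SphGeneralPosition {d m : ℕ} (A : Fin m → EuclideanSpace ℝ (Fin d)) : Prop :=
  ∀ s : Finset (Fin m), s.card = d → LinearIndependent ℝ (fun i : ↥s => A i.1)

open Finset Module Set

theorem SphGeneralPosition.linearIndependent_comp {d m : ℕ}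
    {A : Fin m → EuclideanSpace ℝ (Fin d)} (hA : SphGeneralPosition A) (f : Fin d ↪ Fin m) :
    LinearIndependent ℝ (A ∘ f) :=
  (hA (univ.map f) (by simp)).comp (fun k => ⟨f k, mem_map_of_mem f (mem_univ k)⟩)
    fun _ _ h => f.injective (congrArg Subtype.val h)

section InnerProductSpace

variable {ι V : Type*} [Fintype ι] [NormedAddCommGroup V] [InnerProductSpace ℝ V]

theorem sum_mul_inner_eq_zero_of_sum_smul_eq_zero {α : ι → ℝ} {A : ι → V}
    (hsum : ∑ i, α i • A i = 0) (Q : V) : ∑ i, α i * inner ℝ (A i) Q = 0 := by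
  simp only [← real_inner_smul_left, ← sum_inner, hsum, inner_zero_left]

theorem sum_mul_inner_sub_sub_of_sum_smul_eq_zero {α : ι → ℝ} {A : ι → V}
    (hA : ∀ i, ‖A i‖ = 1) (hsum : ∑ i, α i • A i = 0) (P Q : V) :
    ∑ i, α i * inner ℝ (A i - P) (A i - Q) = (∑ i, α i) * (1 + inner ℝ P Q) := by
  have hexpand : ∀ i, inner ℝ (A i - P) (A i - Q)
      = 1 + inner ℝ P Q - inner ℝ (A i) Q - inner ℝ (A i) P := by
    intro i
    rw [inner_sub_left, inner_sub_right, inner_sub_right, real_inner_self_eq_norm_sq, hA i,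
      real_inner_comm P (A i)]
    ring
  calc ∑ i, α i * inner ℝ (A i - P) (A i - Q)
      = (∑ i, α i) * (1 + inner ℝ P Q) - ∑ i, α i * inner ℝ (A i) Q
          - ∑ i, α i * inner ℝ (A i) P := by
        simp only [hexpand, sum_mul, ← sum_sub_distrib]
        exact sum_congr rfl fun i _ => by ring
    _ = (∑ i, α i) * (1 + inner ℝ P Q) := by
        rw [sum_mul_inner_eq_zero_of_sum_smul_eq_zero hsum,
          sum_mul_inner_eq_zero_of_sum_smul_eq_zero hsum, sub_zero, sub_zero]

end InnerProductSpace

section Module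

variable {V : Type*} [AddCommGroup V] [Module ℝ V]

theorem finrank_vectorSpan_eq_of_linearIndependent_castSucc [FiniteDimensional ℝ V] {n : ℕ}
    {p : Fin (n + 2) → V}
    (hli : LinearIndependent ℝ (p ∘ Fin.castSucc)) (hdep : ¬AffineIndependent ℝ p) :
    finrank ℝ (vectorSpan ℝ (range p)) = n := by
  refine le_antisymm ((finrank_vectorSpan_le_iff_not_affineIndependent ℝ p (by simp)).2 hdep) ?_
  calc n = finrank ℝ (vectorSpan ℝ (range (p ∘ Fin.castSucc))) :=
        (hli.affineIndependent.finrank_vectorSpan (by simp)).symm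
    _ ≤ _ := Submodule.finrank_mono (vectorSpan_mono ℝ (range_comp_subset_range _ _))

theorem zero_mem_affineSpan_of_sum_smul_eq_zero {ι : Type*} [Fintype ι] {α : ι → ℝ}
    {p : ι → V} (hα : ∑ i, α i ≠ 0) (hsum : ∑ i, α i • p i = 0) :
    (0 : V) ∈ affineSpan ℝ (range p) := by
  have hw : ∑ i, (∑ j, α j)⁻¹ * α i = 1 := by rw [← mul_sum, inv_mul_cancel₀ hα]
  have hmem := affineCombination_mem_affineSpan hw p
  rwa [affineCombination_eq_linear_combination _ _ _ hw, sum_congr rfl fun i _ => mul_smul _ _ _,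
    ← smul_sum, hsum, smul_zero] at hmem

theorem card_le_finrank_direction_of_zero_mem [FiniteDimensional ℝ V] {ι : Type*} [Fintype ι]
    {p : ι → V}
    (hp : LinearIndependent ℝ p) {W : AffineSubspace ℝ V} (h0 : (0 : V) ∈ W)
    (hpW : ∀ i, p i ∈ W) : Fintype.card ι ≤ finrank ℝ W.direction := by
  rw [← finrank_span_eq_card hp]
  refine Submodule.finrank_mono (Submodule.span_le.2 ?_)
  rintro _ ⟨i, rfl⟩
  simpa using W.vsub_mem_direction (hpW i) h0

end Module

/-- (i) For points `P, Q` on the sphere with `⟨P,Q⟩ ≠ −1`, the quantity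
`Σᵢ αᵢ⟨Aᵢ − P, Aᵢ − Q⟩ / (1 + ⟨P,Q⟩)` equals `Σᵢ αᵢ`, hence is independent of `P` and `Q`;
(ii) `c₁ = 2Σᵢ αᵢ = 0` iff the points lie in a common `n`-dimensional affine hyperplane of
`ℝ^{n+1}`. -/
theorem spherical_c1 {n : ℕ}
    (A : Fin (n + 2) → EuclideanSpace ℝ (Fin (n + 1)))
    (hA : ∀ i, ‖A i‖ = 1)
    (hgp : SphGeneralPosition A)
    (α : Fin (n + 2) → ℝ) (hα : ∀ i, α i ≠ 0)
    (hsum : ∑ i, α i • A i = 0) :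
    (∀ P Q : EuclideanSpace ℝ (Fin (n + 1)), ‖P‖ = 1 → ‖Q‖ = 1 →
      (inner ℝ P Q : ℝ) ≠ -1 →
      (∑ i, α i * (inner ℝ (A i - P) (A i - Q) : ℝ)) / (1 + (inner ℝ P Q : ℝ))
        = ∑ i, α i) ∧
    ((∑ i, α i) = 0 ↔
      ∃ W : AffineSubspace ℝ (EuclideanSpace ℝ (Fin (n + 1))),
        Module.finrank ℝ W.direction = n ∧ ∀ i, A i ∈ W) := by
  have hli : LinearIndependent ℝ (A ∘ Fin.castSucc) :=
    hgp.linearIndependent_comp Fin.castSuccEmb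
  refine ⟨fun P Q _ _ hPQ => ?_, fun hzero => ?_, fun ⟨W, hWrank, hAW⟩ => ?_⟩
  · have hden : 1 + inner ℝ P Q ≠ 0 := fun h => hPQ (by linarith)
    rw [sum_mul_inner_sub_sub_of_sum_smul_eq_zero hA hsum, mul_div_cancel_right₀ _ hden]
  · have hdep : ¬AffineIndependent ℝ A := fun hind =>
      hα 0 (hind.eq_zero_of_sum_eq_zero hzero hsum 0 (mem_univ _))
    refine ⟨affineSpan ℝ (range A), ?_, fun i => subset_affineSpan ℝ _ ⟨i, rfl⟩⟩
    rw [direction_affineSpan]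
    exact finrank_vectorSpan_eq_of_linearIndependent_castSucc hli hdep
  · by_contra hne
    have h0 : (0 : EuclideanSpace ℝ (Fin (n + 1))) ∈ W :=
      affineSpan_le.2 (range_subset_iff.2 hAW) (zero_mem_affineSpan_of_sum_smul_eq_zero hne hsum)
    have hcard := card_le_finrank_direction_of_zero_mem hli h0 fun i => hAW _
    simp [hWrank] at hcard
end
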